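/- arXiv:2109.13644 — 3 statements merged into one kernel-verified Lean document; each statement's English description precedes it below -/
import Mathlib

section
/- Every maximal radius-homogeneous subset of a finite set X (with dissimilarity d and radius threshold R) equals the ball S_i = {e ∈ X | d(x_i, e) ≤ R} for some element x_i ∈ X. Consequently, there are at most |X| maximal radius-homogeneous sets. -/
/-- Every maximal radius-homogeneous subset of a finite set X equals the ball
`{e | d x e ≤ R}` for some `x`, hence there are at most `|X|` maximal
radius-homogeneous sets. -/
theorem maximal_radius_homogeneous_is_ball
    {X : Type*} [Fintype X] (d : X → X → ℝ) (R : ℝ)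
    (hd0 : ∀ a, d a a = 0)
    (hsymm : ∀ a b, d a b = d b a)
    (hpos : ∀ a b, 0 ≤ d a b) :
    (∀ A : Set X,
      ((∃ c ∈ A, ∀ b ∈ A, d c b ≤ R) ∧
        ∀ B : Set X, (∃ c ∈ B, ∀ b ∈ B, d c b ≤ R) → A ⊆ B → A = B) →
      ∃ x : X, A = {e | d x e ≤ R}) ∧
    {A : Set X |
      (∃ c ∈ A, ∀ b ∈ A, d c b ≤ R) ∧
        ∀ B : Set X, (∃ c ∈ B, ∀ b ∈ B, d c b ≤ R) → A ⊆ B → A = B}.ncard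
      ≤ Fintype.card X := by
  have h1 : ∀ A : Set X,
      ((∃ c ∈ A, ∀ b ∈ A, d c b ≤ R) ∧
        ∀ B : Set X, (∃ c ∈ B, ∀ b ∈ B, d c b ≤ R) → A ⊆ B → A = B) →
      ∃ x : X, A = {e | d x e ≤ R} := by
    rintro A ⟨⟨c, hcA, hc⟩, hmax⟩
    refine ⟨c, hmax _ ⟨c, ?_, fun b hb => hb⟩ (fun b hb => hc b hb)⟩
    simpa [hd0] using hc c hcA
  refine ⟨h1, ?_⟩
  have hsub : {A : Set X |
      (∃ c ∈ A, ∀ b ∈ A, d c b ≤ R) ∧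
        ∀ B : Set X, (∃ c ∈ B, ∀ b ∈ B, d c b ≤ R) → A ⊆ B → A = B}
      ⊆ (fun x : X => {e | d x e ≤ R}) '' Set.univ := by
    intro A hA
    obtain ⟨x, hx⟩ := h1 A hA
    exact ⟨x, Set.mem_univ x, hx.symm⟩
  calc _ ≤ ((fun x : X => {e | d x e ≤ R}) '' Set.univ).ncard :=
        Set.ncard_le_ncard hsub (Set.toFinite _)
    _ ≤ (Set.univ : Set X).ncard := Set.ncard_image_le (Set.toFinite _)
    _ = Fintype.card X := Set.ncard_univ X ▸ Nat.card_eq_fintype_card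
end

section
/- The minimum number of clusters in a radius-homogeneous partition of X under threshold R equals the minimum cardinality of a dominating set of the graph G = (X, E) with distinct x, y adjacent iff d(x,y) ≤ R. -/
/-- The minimum number of clusters of a radius-homogeneous partition of `X`
under `R` equals the minimum cardinality of a dominating set of the graph
where distinct `x, y` are adjacent iff `d x y ≤ R`. -/
theorem min_radius_partition_eq_min_dominating_set
    {X : Type*} [Fintype X] [DecidableEq X] [Nonempty X] (d : X → X → ℝ) (R : ℝ)
    (hd0 : ∀ a, d a a = 0)
    (hsymm : ∀ a b, d a b = d b a)
    (hpos : ∀ a b, 0 ≤ d a b)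
    (hR : 0 ≤ R) :
    sInf {k : ℕ | ∃ P : Finset (Finset X),
        (∀ x : X, ∃ C ∈ P, x ∈ C) ∧
        (∀ C ∈ P, C.Nonempty) ∧
        (∀ C ∈ P, ∀ C' ∈ P, C ≠ C' → Disjoint C C') ∧
        (∀ C ∈ P, ∃ c ∈ C, ∀ b ∈ C, d c b ≤ R) ∧
        P.card = k} =
    sInf {k : ℕ | ∃ Dom : Finset X,
        (∀ v : X, v ∈ Dom ∨
          ∃ u ∈ Dom, (SimpleGraph.fromRel (fun x y => d x y ≤ R)).Adj v u) ∧
        Dom.card = k} := by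
  classical
  apply le_antisymm
  · -- min partition ≤ min dominating set
    have hBne : {k : ℕ | ∃ Dom : Finset X,
        (∀ v : X, v ∈ Dom ∨
          ∃ u ∈ Dom, (SimpleGraph.fromRel (fun x y => d x y ≤ R)).Adj v u) ∧
        Dom.card = k}.Nonempty :=
      ⟨Finset.univ.card, Finset.univ, fun v => Or.inl (Finset.mem_univ v), rfl⟩
    obtain ⟨Dom, hDom, hcard⟩ := Nat.sInf_mem hBne
    -- choice of a dominating neighbor
    have hf : ∀ x : X, ∃ u : X, u ∈ Dom ∧ d u x ≤ R := by
      intro x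
      rcases hDom x with hx | ⟨u, hu, hadj⟩
      · exact ⟨x, hx, by rw [hd0]; exact hR⟩
      · rw [SimpleGraph.fromRel_adj] at hadj
        rcases hadj.2 with h | h
        · exact ⟨u, hu, by rwa [hsymm x u] at h⟩
        · exact ⟨u, hu, h⟩
    set f : X → X := fun x => if x ∈ Dom then x else Classical.choose (hf x) with hfdef
    have hfmem : ∀ x, f x ∈ Dom := by
      intro x
      by_cases hx : x ∈ Dom
      · simp [hfdef, hx]
      · simp only [hfdef, hx, if_false]
        exact (Classical.choose_spec (hf x)).1
    have hfd : ∀ x, d (f x) x ≤ R := by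
      intro x
      by_cases hx : x ∈ Dom
      · simp only [hfdef, hx, if_true]
        rw [hd0]; exact hR
      · simp only [hfdef, hx, if_false]
        exact (Classical.choose_spec (hf x)).2
    have hfix : ∀ u ∈ Dom, f u = u := by intro u hu; simp [hfdef, hu]
    set P : Finset (Finset X) :=
      Dom.image (fun u => Finset.univ.filter (fun x => f x = u)) with hPdef
    have hmemA : P.card ∈ {k : ℕ | ∃ P : Finset (Finset X),
        (∀ x : X, ∃ C ∈ P, x ∈ C) ∧
        (∀ C ∈ P, C.Nonempty) ∧
        (∀ C ∈ P, ∀ C' ∈ P, C ≠ C' → Disjoint C C') ∧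
        (∀ C ∈ P, ∃ c ∈ C, ∀ b ∈ C, d c b ≤ R) ∧
        P.card = k} := by
      refine ⟨P, ?_, ?_, ?_, ?_, rfl⟩
      · intro x
        refine ⟨Finset.univ.filter (fun y => f y = f x), ?_, ?_⟩
        · exact Finset.mem_image_of_mem _ (hfmem x)
        · simp
      · intro C hC
        obtain ⟨u, hu, rfl⟩ := Finset.mem_image.1 hC
        exact ⟨u, by simp [hfix u hu]⟩
      · intro C hC C' hC' hne
        obtain ⟨u, hu, rfl⟩ := Finset.mem_image.1 hC
        obtain ⟨u', hu', rfl⟩ := Finset.mem_image.1 hC'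
        rw [Finset.disjoint_left]
        intro a ha ha'
        simp only [Finset.mem_filter] at ha ha'
        exact hne (by rw [← ha.2, ha'.2])
      · intro C hC
        obtain ⟨u, hu, rfl⟩ := Finset.mem_image.1 hC
        refine ⟨u, by simp [hfix u hu], ?_⟩
        intro b hb
        simp only [Finset.mem_filter] at hb
        rw [← hb.2]
        exact hfd b
    calc sInf _ ≤ P.card := Nat.sInf_le hmemA
      _ ≤ Dom.card := Finset.card_image_le
      _ = _ := hcard
  · -- min dominating set ≤ min partition
    have hAne : {k : ℕ | ∃ P : Finset (Finset X),
        (∀ x : X, ∃ C ∈ P, x ∈ C) ∧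
        (∀ C ∈ P, C.Nonempty) ∧
        (∀ C ∈ P, ∀ C' ∈ P, C ≠ C' → Disjoint C C') ∧
        (∀ C ∈ P, ∃ c ∈ C, ∀ b ∈ C, d c b ≤ R) ∧
        P.card = k}.Nonempty := by
      refine ⟨(Finset.univ.image (fun x : X => ({x} : Finset X))).card,
        Finset.univ.image (fun x : X => ({x} : Finset X)), ?_, ?_, ?_, ?_, rfl⟩
      · intro x
        exact ⟨{x}, Finset.mem_image_of_mem _ (Finset.mem_univ x), Finset.mem_singleton_self x⟩
      · intro C hC
        obtain ⟨x, _, rfl⟩ := Finset.mem_image.1 hC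
        exact ⟨x, Finset.mem_singleton_self x⟩
      · intro C hC C' hC' hne
        obtain ⟨x, _, rfl⟩ := Finset.mem_image.1 hC
        obtain ⟨y, _, rfl⟩ := Finset.mem_image.1 hC'
        rw [Finset.disjoint_left]
        intro a ha ha'
        rw [Finset.mem_singleton] at ha ha'
        exact hne (by rw [ha] at ha'; rw [ha'])
      · intro C hC
        obtain ⟨x, _, rfl⟩ := Finset.mem_image.1 hC
        refine ⟨x, Finset.mem_singleton_self x, ?_⟩
        intro b hb
        rw [Finset.mem_singleton] at hb
        rw [hb, hd0]; exact hR
    obtain ⟨P, hcov, hne, hdisj, hcent, hcardP⟩ := Nat.sInf_mem hAne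
    -- choose a center for each cluster
    choose c hcmem hcR using hcent
    set Dom : Finset X := P.attach.image (fun C => c C.1 C.2) with hDdef
    have hmemB : Dom.card ∈ {k : ℕ | ∃ Dom : Finset X,
        (∀ v : X, v ∈ Dom ∨
          ∃ u ∈ Dom, (SimpleGraph.fromRel (fun x y => d x y ≤ R)).Adj v u) ∧
        Dom.card = k} := by
      refine ⟨Dom, ?_, rfl⟩
      intro v
      obtain ⟨C, hC, hvC⟩ := hcov v
      have hcD : c C hC ∈ Dom :=
        Finset.mem_image_of_mem _ (Finset.mem_attach P ⟨C, hC⟩)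
      by_cases hvc : v = c C hC
      · exact Or.inl (hvc ▸ hcD)
      · refine Or.inr ⟨c C hC, hcD, ?_⟩
        rw [SimpleGraph.fromRel_adj]
        exact ⟨hvc, Or.inr (hcR C hC v hvC)⟩
    calc sInf _ ≤ Dom.card := Nat.sInf_le hmemB
      _ ≤ P.attach.card := Finset.card_image_le
      _ = P.card := Finset.card_attach
      _ = _ := hcardP
end

section
/- A graph on n vertices has at most 3^{n/3} maximal cliques (Moon–Moser bound); hence a finite set X of n elements with dissimilarity d has at most 3^{n/3} maximal diameter-homogeneous subsets under any threshold D. -/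
/-!
Induction on the number of vertices. Let `v` be a vertex of maximum degree `Δ`. Every maximal
clique contains a vertex `u` not adjacent to `v` (possibly `v` itself), and deleting `u` from a
maximal clique containing `u` leaves a maximal clique of the graph induced on the neighbourhood
of `u`, which has `deg u ≤ Δ` vertices. Hence there are at most
`(n - Δ) · 3^(Δ/3) ≤ 3^((n - Δ)/3) · 3^(Δ/3)` maximal cliques, by `k ≤ 3^(k/3)`.

For a dissimilarity and `D ≥ 0`, the maximal homogeneous sets are the maximal cliques of the
threshold graph; for `D < 0` only `∅` is homogeneous, since `d a a = 0`.
-/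

theorem Nat.cube_le_three_pow (k : ℕ) : k ^ 3 ≤ 3 ^ k := by
  rcases Nat.lt_or_ge k 3 with hk | hk
  · interval_cases k <;> norm_num
  induction k, hk using Nat.le_induction with
  | base => norm_num
  | succ k hk ih =>
    calc (k + 1) ^ 3 ≤ 3 * k ^ 3 := by
          nlinarith [Nat.mul_le_mul_left (k * k) hk, Nat.mul_le_mul_left k hk]
      _ ≤ 3 * 3 ^ k := Nat.mul_le_mul_left 3 ih
      _ = 3 ^ (k + 1) := by ring

theorem Nat.cast_le_three_rpow (k : ℕ) : (k : ℝ) ≤ 3 ^ ((k : ℝ) / 3) := by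
  refine le_of_pow_le_pow_left₀ three_ne_zero (by positivity) ?_
  rw [← Real.rpow_mul_natCast (by norm_num), Nat.cast_ofNat, div_mul_cancel₀ _ three_ne_zero,
    Real.rpow_natCast]
  exact_mod_cast k.cube_le_three_pow

namespace SimpleGraph

variable {V : Type*} (G : SimpleGraph V)

def maximalCliques : Set (Finset V) :=
  {s | Maximal (fun t : Finset V => G.IsClique (t : Set V)) s}

variable {G}

theorem mem_maximalCliques_iff_forall_insert [DecidableEq V] {s : Finset V} :
    s ∈ G.maximalCliques ↔
      G.IsClique (s : Set V) ∧ ∀ x ∉ s, ¬ G.IsClique (insert x (s : Set V)) := by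
  rw [maximalCliques, Set.mem_ofPred_eq,
    Finset.maximal_iff_forall_insert fun _ _ ht hst => ht.subset (Finset.coe_subset.2 hst)]
  simp only [Finset.coe_insert]

theorem exists_not_adj_of_mem_maximalCliques {s : Finset V} (hs : s ∈ G.maximalCliques)
    (v : V) : ∃ u ∈ s, ¬ G.Adj v u := by
  classical
  rw [mem_maximalCliques_iff_forall_insert] at hs
  by_contra! hadj
  have hv : v ∈ s := by
    by_contra hv
    exact hs.2 v hv (isClique_insert.2 ⟨hs.1, fun b hb _ => hadj b hb⟩)
  exact G.irrefl (hadj v hv)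

theorem isClique_insert_image_val_iff {u : V} {t : Set (G.neighborSet u)} :
    G.IsClique (insert u (Subtype.val '' t)) ↔ (G.induce (G.neighborSet u)).IsClique t := by
  rw [isClique_insert, isClique_induce_iff, and_iff_left_iff_imp]
  rintro - _ ⟨b, -, rfl⟩ -
  exact b.2

theorem exists_mem_maximalCliques_induce_neighborSet [DecidableEq V] {u : V} {s : Finset V}
    (hs : s ∈ G.maximalCliques) (hu : u ∈ s) :
    ∃ t ∈ (G.induce (G.neighborSet u)).maximalCliques,
      insert u (t.map (Function.Embedding.subtype _)) = s := by
  classical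
  rw [mem_maximalCliques_iff_forall_insert] at hs
  set t := s.subtype (· ∈ G.neighborSet u)
  have hts : insert u (t.map (Function.Embedding.subtype _)) = s := by
    ext a
    rw [Finset.subtype_map, Finset.mem_insert, Finset.mem_filter, mem_neighborSet]
    by_cases hau : a = u
    · simp [hau, hu]
    · simpa [hau] using fun ha => hs.1 hu ha (Ne.symm hau)
  have hst : (s : Set V) = insert u (Subtype.val '' (t : Set (G.neighborSet u))) := by
    rw [← hts, Finset.coe_insert, Finset.coe_map, Function.Embedding.coe_subtype]
  refine ⟨t, mem_maximalCliques_iff_forall_insert.2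
    ⟨isClique_insert_image_val_iff.1 (hst ▸ hs.1), fun x hxt hx => ?_⟩, hts⟩
  have hxs : (x : V) ∉ s := by simpa [t] using hxt
  apply hs.2 x hxs
  rw [hst, Set.insert_comm, ← Set.image_insert_eq]
  exact isClique_insert_image_val_iff.2 hx

theorem ncard_maximalCliques_mem_le_induce_neighborSet [Finite V] (u : V) :
    {s ∈ G.maximalCliques | u ∈ s}.ncard ≤
      (G.induce (G.neighborSet u)).maximalCliques.ncard := by
  classical
  refine (Set.ncard_le_ncard ?_ (Set.toFinite _)).trans
    (Set.ncard_image_le (f := fun t => insert u (t.map (Function.Embedding.subtype _)))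
      (Set.toFinite _))
  rintro s ⟨hs, hu⟩
  exact exists_mem_maximalCliques_induce_neighborSet hs hu

theorem ncard_maximalCliques_le [Fintype V] (G : SimpleGraph V) :
    (G.maximalCliques.ncard : ℝ) ≤ 3 ^ ((Fintype.card V : ℝ) / 3) := by
  classical
  induction hn : Fintype.card V using Nat.strong_induction_on generalizing V with
  | _ n ih =>
  cases isEmpty_or_nonempty V
  · rw [← hn, Fintype.card_eq_zero, Nat.cast_zero, zero_div, Real.rpow_zero]
    exact_mod_cast Set.ncard_le_one_of_subsingleton _
  obtain ⟨v, hv⟩ := G.exists_maximal_degree_vertex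
  have hcover : G.maximalCliques ⊆
      ⋃ u ∈ (G.neighborFinset v)ᶜ, {s ∈ G.maximalCliques | u ∈ s} := by
    intro s hs
    obtain ⟨u, hus, hvu⟩ := exists_not_adj_of_mem_maximalCliques hs v
    exact Set.mem_biUnion (by simpa using hvu) ⟨hs, hus⟩
  have hlocal (u : V) :
      ({s ∈ G.maximalCliques | u ∈ s}.ncard : ℝ) ≤ 3 ^ ((G.degree v : ℝ) / 3) := by
    have hu := ih (G.degree u) (hn ▸ G.degree_lt_card_verts u) (G.induce (G.neighborSet u))
      (G.card_neighborSet_eq_degree u)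
    refine (Nat.cast_le.2 (ncard_maximalCliques_mem_le_induce_neighborSet u)).trans
      (hu.trans ?_)
    gcongr
    · norm_num
    · exact hv ▸ G.degree_le_maxDegree u
  have hdeg : G.degree v ≤ n := hn ▸ (G.degree_lt_card_verts v).le
  calc (G.maximalCliques.ncard : ℝ)
      ≤ ∑ u ∈ (G.neighborFinset v)ᶜ, ({s ∈ G.maximalCliques | u ∈ s}.ncard : ℝ) := by
        exact_mod_cast (Set.ncard_le_ncard hcover).trans (Finset.set_ncard_biUnion_le _ _)
    _ ≤ ∑ u ∈ (G.neighborFinset v)ᶜ, (3 : ℝ) ^ ((G.degree v : ℝ) / 3) :=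
        Finset.sum_le_sum fun u _ => hlocal u
    _ = ((n - G.degree v : ℕ) : ℝ) * 3 ^ ((G.degree v : ℝ) / 3) := by
        rw [Finset.sum_const, Finset.card_compl, card_neighborFinset_eq_degree, hn, nsmul_eq_mul]
    _ ≤ 3 ^ (((n - G.degree v : ℕ) : ℝ) / 3) * 3 ^ ((G.degree v : ℝ) / 3) := by
        gcongr
        exact Nat.cast_le_three_rpow _
    _ = 3 ^ ((n : ℝ) / 3) := by
        rw [← Real.rpow_add three_pos, ← add_div, Nat.cast_sub hdeg, sub_add_cancel]

theorem isClique_fromRel_iff {r : V → V → Prop} (hr : ∀ a, r a a)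
    (hsymm : ∀ a b, r a b → r b a) {s : Set V} :
    (fromRel r).IsClique s ↔ ∀ a ∈ s, ∀ b ∈ s, r a b := by
  refine ⟨fun h a ha b hb => ?_, fun h a ha b hb hab => ⟨hab, .inl (h a ha b hb)⟩⟩
  rcases eq_or_ne a b with rfl | hab
  · exact hr a
  · exact (h ha hb hab).2.elim id (hsymm b a)

end SimpleGraph

theorem moon_moser_maximal_cliques_general
    {V : Type*} [Fintype V] :
    (∀ G : SimpleGraph V,
      ({A : Finset V | G.IsClique (A : Set V) ∧
          ∀ B : Finset V, G.IsClique (B : Set V) → A ⊆ B → A = B}.ncard : ℝ) ≤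
        (3 : ℝ) ^ ((Fintype.card V : ℝ) / 3)) ∧
    ∀ (d : V → V → ℝ) (D : ℝ),
      (∀ a, d a a = 0) → (∀ a b, d a b = d b a) → (∀ a b, 0 ≤ d a b) →
      ({A : Finset V | (∀ a ∈ A, ∀ b ∈ A, d a b ≤ D) ∧
          ∀ B : Finset V, (∀ a ∈ B, ∀ b ∈ B, d a b ≤ D) → A ⊆ B → A = B}.ncard : ℝ) ≤
        (3 : ℝ) ^ ((Fintype.card V : ℝ) / 3) := by
  have hmaximal (P : Finset V → Prop) :
      {A : Finset V | P A ∧ ∀ B : Finset V, P B → A ⊆ B → A = B} = {A | Maximal P A} :=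
    Set.ext fun _ => maximal_iff.symm
  refine ⟨fun G => hmaximal _ ▸ G.ncard_maximalCliques_le, fun d D h0 hsymm _ => ?_⟩
  rw [hmaximal]
  rcases le_or_gt 0 D with hD | hD
  · have hclique (A : Finset V) : (∀ a ∈ A, ∀ b ∈ A, d a b ≤ D) ↔
        (SimpleGraph.fromRel fun a b => d a b ≤ D).IsClique (A : Set V) :=
      (SimpleGraph.isClique_fromRel_iff (fun a => (h0 a).symm ▸ hD)
        fun a b h => hsymm a b ▸ h).symm
    simp_rw [hclique]
    exact SimpleGraph.ncard_maximalCliques_le _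
  · have hempty :
        {A | Maximal (fun A : Finset V => ∀ a ∈ A, ∀ b ∈ A, d a b ≤ D) A} ⊆ {∅} := by
      rintro A ⟨hA, -⟩
      exact Finset.eq_empty_of_forall_notMem fun a ha => (hA a ha a ha).not_gt (h0 a ▸ hD)
    calc _ ≤ (({∅} : Set (Finset V)).ncard : ℝ) := by
          exact_mod_cast Set.ncard_le_ncard hempty
      _ = 1 := by rw [Set.ncard_singleton, Nat.cast_one]
      _ ≤ _ := Real.one_le_rpow (by norm_num) (by positivity)

/-- Moon–Moser bound: a graph on `n` vertices has at most `3^(n/3)` maximal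
cliques; hence a finite set with a dissimilarity has at most `3^(n/3)` maximal
diameter-homogeneous subsets under any threshold `D`. -/
theorem moon_moser_maximal_cliques
    {V : Type*} [Fintype V] [DecidableEq V] :
    (∀ G : SimpleGraph V,
      ({A : Finset V | G.IsClique (A : Set V) ∧
          ∀ B : Finset V, G.IsClique (B : Set V) → A ⊆ B → A = B}.ncard : ℝ) ≤
        (3 : ℝ) ^ ((Fintype.card V : ℝ) / 3)) ∧
    ∀ (d : V → V → ℝ) (D : ℝ),
      (∀ a, d a a = 0) → (∀ a b, d a b = d b a) → (∀ a b, 0 ≤ d a b) →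
      ({A : Finset V | (∀ a ∈ A, ∀ b ∈ A, d a b ≤ D) ∧
          ∀ B : Finset V, (∀ a ∈ B, ∀ b ∈ B, d a b ≤ D) → A ⊆ B → A = B}.ncard : ℝ) ≤
        (3 : ℝ) ^ ((Fintype.card V : ℝ) / 3) :=
  moon_moser_maximal_cliques_general
end
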